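/- Fix C2 > 0 and m1, m2 ∈ ℝ, and set |m| = √(m1² + m2²). Every global minimizer l* > 0 of the function g(l) = l⁻⁴ · (9 + exp(2l(l − 2m2)/C2) + exp(2l(l + √3·m1 + m2)/C2) + exp(2l(l − √3·m1 + m2)/C2)) over (0,∞) satisfies √C2 − |m| < l* < √2·√C2 + |m|. -/

import Mathlib

open Real

/-- The (rescaled) variance `S(l; C2)` of the error on the estimate of `C2`,
as a function of the edge length `l`. -/
noncomputable def errVarC2 (C2 m1 m2 l : ℝ) : ℝ :=
  (l ^ 4)⁻¹ * (9 + Real.exp (2 * l * (l - 2 * m2) / C2)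
    + Real.exp (2 * l * (l + Real.sqrt 3 * m1 + m2) / C2)
    + Real.exp (2 * l * (l - Real.sqrt 3 * m1 + m2) / C2))

/-!
Write `S(l) = l⁻⁴ h(l)` with `h(l) = 9 + ∑ᵢ exp (2 l (l - cᵢ) / C2)`, where `cᵢ = 2 ⟪m, uᵢ⟫` for
three unit vectors `uᵢ` at angles of 120°, so that `|cᵢ| ≤ 2 |m|` and `∑ᵢ cᵢ = 0`. At an interior
minimum `l h'(l) = 4 h(l)`, and `l h'(l) = ∑ᵢ eᵢ (4 l² - 2 cᵢ l) / C2` with `eᵢ > 0`.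
If `l (l + |m|) ≤ C2` every coefficient is at most `4`, so `l h' < 4 h` because of the constant
`9`. If `l (l - |m|) ≥ 2 C2` every coefficient is at least `8`, and `eᵢ ≥ 1 + 2 l (l - cᵢ) / C2`
gives `∑ᵢ eᵢ ≥ 3 + 6 l² / C2 ≥ 15 > 9`, so `l h' > 4 h`.
-/

theorem mul_deriv_eq_of_isLocalMin_inv_pow_mul {h : ℝ → ℝ} {h' l : ℝ} (n : ℕ) (hl : l ≠ 0)
    (hh : HasDerivAt h h' l) (hmin : IsLocalMin (fun x => (x ^ n)⁻¹ * h x) l) :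
    l * h' = n * h l := by
  have hpow : l ^ n ≠ 0 := pow_ne_zero n hl
  have hF := ((hasDerivAt_pow n l).inv hpow).mul hh
  have hzero := hmin.hasDerivAt_eq_zero hF
  simp only [Pi.inv_apply] at hzero
  rcases n with _ | n
  · simp_all
  · simp only [Nat.add_sub_cancel] at hzero
    field_simp at hzero
    refine mul_left_cancel₀ (pow_ne_zero n hl) ?_
    push_cast at hzero ⊢
    linear_combination hzero

section ExpSum

variable {ι : Type*} [Fintype ι]

noncomputable def expSum (a C : ℝ) (c : ι → ℝ) (l : ℝ) : ℝ :=
  a + ∑ i, exp (2 * l * (l - c i) / C)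

noncomputable def expSumDeriv (C : ℝ) (c : ι → ℝ) (l : ℝ) : ℝ :=
  ∑ i, exp (2 * l * (l - c i) / C) * ((4 * l - 2 * c i) / C)

theorem hasDerivAt_expSum (a C : ℝ) (c : ι → ℝ) (l : ℝ) :
    HasDerivAt (expSum a C c) (expSumDeriv C c l) l := by
  have hexponent : ∀ i, HasDerivAt (fun x => 2 * x * (x - c i) / C) ((4 * l - 2 * c i) / C) l := by
    intro i
    have := (((hasDerivAt_id l).const_mul 2).mul ((hasDerivAt_id l).sub_const (c i))).div_const C
    simp only [id_eq] at this
    exact this.congr_deriv (by ring)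
  exact (HasDerivAt.fun_sum fun i _ => (hexponent i).exp).const_add a

theorem mul_expSumDeriv_lt {a C M l : ℝ} {c : ι → ℝ} (ha : 0 < a) (hC : 0 < C) (hl : 0 < l)
    (hc : ∀ i, -c i ≤ 2 * M) (hlM : l * (l + M) ≤ C) :
    l * expSumDeriv C c l < 4 * expSum a C c l := by
  have hterm : ∀ i, l * (exp (2 * l * (l - c i) / C) * ((4 * l - 2 * c i) / C))
      ≤ 4 * exp (2 * l * (l - c i) / C) := by
    intro i
    have hcoef : l * ((4 * l - 2 * c i) / C) ≤ 4 := by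
      rw [← mul_div_assoc, div_le_iff₀ hC]
      nlinarith [mul_le_mul_of_nonneg_left (hc i) hl.le]
    nlinarith [exp_pos (2 * l * (l - c i) / C)]
  calc l * expSumDeriv C c l ≤ 4 * ∑ i, exp (2 * l * (l - c i) / C) := by
        rw [expSumDeriv, Finset.mul_sum, Finset.mul_sum]
        exact Finset.sum_le_sum fun i _ => hterm i
    _ < 4 * expSum a C c l := by rw [expSum]; linarith

theorem sum_add_card_le_sum_exp (C : ℝ) (c : ι → ℝ) (l : ℝ) :
    2 * l * (Fintype.card ι * l - ∑ i, c i) / C + Fintype.card ι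
      ≤ ∑ i, exp (2 * l * (l - c i) / C) := by
  have hsum : ∑ i, (2 * l * (l - c i) / C + 1)
      = 2 * l * (Fintype.card ι * l - ∑ i, c i) / C + Fintype.card ι := by
    simp only [Finset.sum_add_distrib, ← Finset.sum_div, ← Finset.mul_sum, Finset.sum_sub_distrib,
      Finset.sum_const, Finset.card_univ, nsmul_eq_mul, mul_one]
  rw [← hsum]
  exact Finset.sum_le_sum fun i _ => add_one_le_exp _

theorem four_mul_expSum_lt_mul_expSumDeriv {a C M l : ℝ} {c : ι → ℝ}
    (ha : a < 5 * Fintype.card ι) (hC : 0 < C) (hl : 0 < l) (hM : 0 ≤ M)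
    (hc : ∀ i, c i ≤ 2 * M) (hc_sum : ∑ i, c i = 0) (hlM : 2 * C ≤ l * (l - M)) :
    4 * expSum a C c l < l * expSumDeriv C c l := by
  have hterm : ∀ i, 8 * exp (2 * l * (l - c i) / C)
      ≤ l * (exp (2 * l * (l - c i) / C) * ((4 * l - 2 * c i) / C)) := by
    intro i
    have hcoef : 8 ≤ l * ((4 * l - 2 * c i) / C) := by
      rw [← mul_div_assoc, le_div_iff₀ hC]
      nlinarith [mul_le_mul_of_nonneg_left (hc i) hl.le]
    nlinarith [exp_pos (2 * l * (l - c i) / C)]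
  have hexp : a < ∑ i, exp (2 * l * (l - c i) / C) := by
    have hcard := sum_add_card_le_sum_exp C c l
    rw [hc_sum, sub_zero] at hcard
    have : 4 * (Fintype.card ι : ℝ) ≤ 2 * l * (Fintype.card ι * l) / C := by
      rw [le_div_iff₀ hC]
      nlinarith [mul_nonneg hl.le hM, Nat.cast_nonneg (α := ℝ) (Fintype.card ι)]
    linarith
  calc 4 * expSum a C c l < 8 * ∑ i, exp (2 * l * (l - c i) / C) := by rw [expSum]; linarith
    _ ≤ l * expSumDeriv C c l := by
        rw [expSumDeriv, Finset.mul_sum, Finset.mul_sum]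
        exact Finset.sum_le_sum fun i _ => hterm i

end ExpSum

/-- `2 ⟪m, u⟫` for the unit vectors `u = (0, 1), (-√3/2, -1/2), (√3/2, -1/2)`. -/
noncomputable def hexOffsets (m1 m2 : ℝ) : Fin 3 → ℝ :=
  ![2 * m2, -(√3 * m1 + m2), √3 * m1 - m2]

theorem abs_hexOffsets_le (m1 m2 : ℝ) (i : Fin 3) :
    |hexOffsets m1 m2 i| ≤ 2 * √(m1 ^ 2 + m2 ^ 2) := by
  have h3 : √3 ^ 2 = 3 := sq_sqrt (by norm_num)
  rw [show 2 * √(m1 ^ 2 + m2 ^ 2) = √(4 * (m1 ^ 2 + m2 ^ 2)) by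
    rw [sqrt_mul (by norm_num), show (4 : ℝ) = 2 ^ 2 by norm_num, sqrt_sq (by norm_num)]]
  apply abs_le_sqrt
  fin_cases i <;>
    simp only [hexOffsets, Fin.zero_eta, Fin.mk_one, Fin.reduceFinMk, Matrix.cons_val] <;>
    nlinarith [sq_nonneg m1, sq_nonneg (m1 - √3 * m2), sq_nonneg (m1 + √3 * m2)]

theorem sum_hexOffsets (m1 m2 : ℝ) : ∑ i, hexOffsets m1 m2 i = 0 := by
  simp only [hexOffsets, Fin.sum_univ_three, Matrix.cons_val]
  ring

theorem errVarC2_eq_inv_pow_mul_expSum (C2 m1 m2 : ℝ) :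
    errVarC2 C2 m1 m2 = fun l => (l ^ 4)⁻¹ * expSum 9 C2 (hexOffsets m1 m2) l := by
  ext l
  simp only [errVarC2, expSum, hexOffsets, Fin.sum_univ_three, Matrix.cons_val]
  ring_nf

/-- Every global minimizer `l*` of `S(·; C2)` on `(0,∞)` satisfies
`√C2 − |m| < l* < √2·√C2 + |m|` (Proposition 2). -/
theorem errVarC2_minimizer_bounds (C2 m1 m2 lstar : ℝ) (hC2 : 0 < C2)
    (hlstar : 0 < lstar)
    (hmin : ∀ l : ℝ, 0 < l → errVarC2 C2 m1 m2 lstar ≤ errVarC2 C2 m1 m2 l) :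
    Real.sqrt C2 - Real.sqrt (m1 ^ 2 + m2 ^ 2) < lstar ∧
    lstar < Real.sqrt 2 * Real.sqrt C2 + Real.sqrt (m1 ^ 2 + m2 ^ 2) := by
  set M := √(m1 ^ 2 + m2 ^ 2)
  have hM : 0 ≤ M := sqrt_nonneg _
  have hc := abs_hexOffsets_le m1 m2
  have hC : √C2 ^ 2 = C2 := sq_sqrt hC2.le
  have hcrit : lstar * expSumDeriv C2 (hexOffsets m1 m2) lstar
      = 4 * expSum 9 C2 (hexOffsets m1 m2) lstar := by
    refine mul_deriv_eq_of_isLocalMin_inv_pow_mul 4 hlstar.ne' (hasDerivAt_expSum _ _ _ _) ?_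
    rw [← errVarC2_eq_inv_pow_mul_expSum]
    filter_upwards [Ioi_mem_nhds hlstar] with l hl using hmin l hl
  constructor
  · by_contra! hle
    refine (mul_expSumDeriv_lt (by norm_num) hC2 hlstar
      (fun i => (neg_le_abs _).trans (hc i)) ?_).ne hcrit
    nlinarith [sqrt_nonneg C2]
  · by_contra! hge
    refine (four_mul_expSum_lt_mul_expSumDeriv (by norm_num) hC2 hlstar hM
      (fun i => (le_abs_self _).trans (hc i)) (sum_hexOffsets m1 m2) ?_).ne' hcrit
    have h2 : √2 ^ 2 = 2 := sq_sqrt (by norm_num)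
    nlinarith [mul_nonneg (sqrt_nonneg 2) (sqrt_nonneg C2)]
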